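/- Let F_hex = x1x2x3x4 + x2x3x6x7 + x3x4x7x8 + x1x4x5x8 + x1x2x5x6 + x5x6x7x8 and let Λ_2 be the list of 18 degree-two monomials ∂_1∂_3, ∂_2∂_4, ∂_1∂_8, ∂_4∂_5, ∂_2∂_5, ∂_1∂_6, ∂_3∂_6, ∂_2∂_7, ∂_4∂_7, ∂_3∂_8, ∂_6∂_8, ∂_5∂_7, ∂_1∂_2, ∂_1∂_4, ∂_1∂_5, ∂_2∂_6, ∂_2∂_3, ∂_3∂_4. Then the 18×18 second Hessian matrix H²_{F_hex} = (e·e'·F_hex)_{e,e'∈Λ_2} (whose entries are real constants) has eigenvalues 1 and −1, each with multiplicity 9; in particular its determinant is nonzero. -/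

import Mathlib

open MvPolynomial

noncomputable section

lemma pderiv_commute {n : ℕ} (i j : Fin n) (f : MvPolynomial (Fin n) ℝ) :
    pderiv i (pderiv j f) = pderiv j (pderiv i f) := by
  rcases eq_or_ne i j with rfl | hij
  · rfl
  · induction f using MvPolynomial.induction_on' with
    | monomial m a =>
        simp only [pderiv_monomial]
        have h1 : (m - Finsupp.single j 1 : Fin n →₀ ℕ) i = m i := by
          rw [Finsupp.tsub_apply, Finsupp.single_eq_of_ne hij, tsub_zero]
        have h2 : (m - Finsupp.single i 1 : Fin n →₀ ℕ) j = m j := by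
          rw [Finsupp.tsub_apply, Finsupp.single_eq_of_ne hij.symm, tsub_zero]
        rw [h1, h2, tsub_right_comm]
        congr 1
        ring
    | add p q hp hq => simp [hp, hq]

/-- The set of the partial derivative operators `∂ᵢ` on `ℝ[x₁, …, xₙ]`. -/
def pdSet (n : ℕ) : Set (Module.End ℝ (MvPolynomial (Fin n) ℝ)) :=
  Set.range fun i : Fin n =>
    ((pderiv i : Derivation ℝ (MvPolynomial (Fin n) ℝ) (MvPolynomial (Fin n) ℝ)) :
      MvPolynomial (Fin n) ℝ →ₗ[ℝ] MvPolynomial (Fin n) ℝ)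

instance pdCommRing (n : ℕ) : CommRing (Algebra.adjoin ℝ (pdSet n)) :=
  Algebra.adjoinCommRingOfComm ℝ (by
    rintro _ ⟨i, rfl⟩ _ ⟨j, rfl⟩
    apply LinearMap.ext
    intro f
    exact pderiv_commute i j f)

/-- The algebra map sending a polynomial `f` (in the "∂ variables") to the differential
operator `f(∂₁, …, ∂ₙ)` acting on `ℝ[x₁, …, xₙ]`; thus `dop n f F` is the result of
applying the differential operator `f(∂₁, …, ∂ₙ)` to the polynomial `F`. -/
def dop (n : ℕ) : MvPolynomial (Fin n) ℝ →ₐ[ℝ] Module.End ℝ (MvPolynomial (Fin n) ℝ) :=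
  (Algebra.adjoin ℝ (pdSet n)).val.comp
    (aeval fun i : Fin n =>
      (⟨_, Algebra.subset_adjoin (Set.mem_range_self i)⟩ : Algebra.adjoin ℝ (pdSet n)))

/-- `Ann F`, the annihilator of `F`: the ideal of all differential-operator polynomials `f`
with `f(∂₁, …, ∂ₙ) F = 0`. -/
def annIdeal {n : ℕ} (F : MvPolynomial (Fin n) ℝ) : Ideal (MvPolynomial (Fin n) ℝ) where
  carrier := {f | dop n f F = 0}
  add_mem' := by
    intro a b ha hb
    simp only [Set.mem_setOf_eq] at *
    rw [map_add, LinearMap.add_apply, ha, hb, add_zero]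
  zero_mem' := by
    simp only [Set.mem_setOf_eq, map_zero, LinearMap.zero_apply]
  smul_mem' := by
    intro c f hf
    simp only [Set.mem_setOf_eq] at *
    rw [smul_eq_mul, map_mul, Module.End.mul_apply, hf, map_zero]

/-- The Artinian Gorenstein algebra `A_F = ℝ[∂₁, …, ∂ₙ]/Ann(F)`. -/
abbrev AF {n : ℕ} (F : MvPolynomial (Fin n) ℝ) := MvPolynomial (Fin n) ℝ ⧸ annIdeal F

/-- The degree-`k` homogeneous component `(A_F)_k` of `A_F`, as a submodule of `A_F`:
the image of the space of homogeneous polynomials of degree `k` under the quotient map. -/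
def gradeA {n : ℕ} (F : MvPolynomial (Fin n) ℝ) (k : ℕ) : Submodule ℝ (AF F) :=
  Submodule.map (Ideal.Quotient.mkₐ ℝ (annIdeal F)).toLinearMap
    (homogeneousSubmodule (Fin n) ℝ k)

/-- `ℓ ∈ A_F` is a strong Lefschetz element of `A_F` (with socle degree `s`) if the
multiplication map `×ℓ^(s-2k) : (A_F)_k → (A_F)_(s-k)` is bijective for every `k` with
`0 ≤ k ≤ s/2`. -/
def IsSLelem {n : ℕ} (F : MvPolynomial (Fin n) ℝ) (s : ℕ) (ℓ : AF F) : Prop :=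
  ∀ k : ℕ, 2 * k ≤ s →
    Set.BijOn (fun f => ℓ ^ (s - 2 * k) * f) (gradeA F k) (gradeA F (s - k))

/-- `A_F` (with socle degree `s`) has the strong Lefschetz property. -/
def HasSLP {n : ℕ} (F : MvPolynomial (Fin n) ℝ) (s : ℕ) : Prop :=
  ∃ ℓ ∈ gradeA F 1, IsSLelem F s ℓ

/-- `A_F` (with socle degree `s`) satisfies the Hodge–Riemann relation with respect to the
class `ℓ` of a linear form `L`: for every `k` with `0 ≤ k ≤ s/2`, the bilinear form
`Q^k_ℓ(f, g) = (-1)^k P^k(f, ℓ^(s-2k) g)` (where `P^k(f, g) = f g F` is the Poincaré duality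
pairing) is positive definite on the kernel of `×ℓ^(s-2k+1) : (A_F)_k → (A_F)_(s-k+1)`,
i.e. `Q^k_ℓ(f, f) > 0` for every nonzero `f ∈ (A_F)_k` in that kernel. -/
def SatisfiesHRR {n : ℕ} (F : MvPolynomial (Fin n) ℝ) (s : ℕ) (L : MvPolynomial (Fin n) ℝ) :
    Prop :=
  ∀ k : ℕ, 2 * k ≤ s →
    ∀ f ∈ homogeneousSubmodule (Fin n) ℝ k,
      dop n (L ^ (s - 2 * k + 1) * f) F = 0 →
      Ideal.Quotient.mk (annIdeal F) f ≠ 0 →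
      0 < (-1 : ℝ) ^ k * constantCoeff (dop n (L ^ (s - 2 * k) * f * f) F)

/-- The facet polynomial of the regular hexahedron (cube)
(vertices `0,…,7` standing for `1,…,8`). -/
def Fhex : MvPolynomial (Fin 8) ℝ :=
  X 0 * X 1 * X 2 * X 3 + X 1 * X 2 * X 5 * X 6 + X 2 * X 3 * X 6 * X 7 +
    X 0 * X 3 * X 4 * X 7 + X 0 * X 1 * X 4 * X 5 + X 4 * X 5 * X 6 * X 7

/-- The list `Λ₂` of 18 degree-two monomials
`∂₁∂₃, ∂₂∂₄, ∂₁∂₈, ∂₄∂₅, ∂₂∂₅, ∂₁∂₆, ∂₃∂₆, ∂₂∂₇, ∂₄∂₇, ∂₃∂₈, ∂₆∂₈, ∂₅∂₇,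
∂₁∂₂, ∂₁∂₄, ∂₁∂₅, ∂₂∂₆, ∂₂∂₃, ∂₃∂₄` (in `0`-based indexing). -/
def lam2 : Fin 18 → MvPolynomial (Fin 8) ℝ :=
  ![X 0 * X 2, X 1 * X 3, X 0 * X 7, X 3 * X 4, X 1 * X 4, X 0 * X 5,
    X 2 * X 5, X 1 * X 6, X 3 * X 6, X 2 * X 7, X 5 * X 7, X 4 * X 6,
    X 0 * X 1, X 0 * X 3, X 0 * X 4, X 1 * X 5, X 1 * X 2, X 2 * X 3]

/-!
Every monomial of `Fhex` is squarefree, and on squarefree polynomials `∂ᵢ` simply shifts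
coefficients, so for monomials `e, e'` of degree two the constant `e e' Fhex` is the coefficient
of the monomial `e e'` in `Fhex`: it is `1` if `e e'` is the monomial of a face of the cube and `0`
otherwise. Each monomial of `Λ₂` completes to a face monomial with exactly one other monomial of
`Λ₂`, so the second Hessian is the permutation matrix of a fixed-point-free involution. After
reordering, it is block diagonal with nine blocks `!![0, 1; 1, 0]`, each of characteristic
polynomial `(x - 1)(x + 1)`; its determinant is the sign of the involution.
-/

namespace MvPolynomial

variable {σ R : Type*} [CommSemiring R]

theorem pderiv_mem_restrictDegree {f : MvPolynomial σ R} {d : ℕ}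
    (hf : f ∈ restrictDegree σ R d) (i : σ) : pderiv i f ∈ restrictDegree σ R d := by
  classical
  rw [mem_restrictDegree] at hf ⊢
  intro m hm j
  have hcoeff : coeff (m + Finsupp.single i 1) f ≠ 0 := by
    intro h
    rw [mem_support_iff, coeff_pderiv, h, zero_mul] at hm
    exact hm rfl
  calc m j ≤ (m + Finsupp.single i 1 : σ →₀ ℕ) j := by simp
    _ ≤ d := hf _ (mem_support_iff.mpr hcoeff) j

theorem coeff_pderiv_of_mem_restrictDegree_one {f : MvPolynomial σ R}
    (hf : f ∈ restrictDegree σ R 1) (i : σ) (m : σ →₀ ℕ) :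
    coeff m (pderiv i f) = coeff (m + Finsupp.single i 1) f := by
  classical
  rw [coeff_pderiv]
  rcases Nat.eq_zero_or_pos (m i) with hmi | hmi
  · simp [hmi]
  · have : m + Finsupp.single i 1 ∉ f.support := fun hm =>
      absurd ((mem_restrictDegree _ _ 1).mp hf _ hm i) (by simp; omega)
    rw [notMem_support_iff.mp this, zero_mul]

variable [DecidableEq σ]

theorem prod_map_X_eq_monomial (s : Multiset σ) :
    (s.map X).prod = monomial (Multiset.toFinsupp s) (1 : R) := by
  induction s using Multiset.induction_on with
  | empty => simp
  | cons a s ih =>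
    rw [Multiset.map_cons, Multiset.prod_cons, ih, X, monomial_mul, one_mul,
      ← Multiset.singleton_add, Multiset.toFinsupp_add, Multiset.toFinsupp_singleton]

theorem coeff_toFinsupp_sum_prod_map_X (L : List (Multiset σ)) (t : Multiset σ) :
    coeff (Multiset.toFinsupp t) (L.map fun s => (s.map X).prod).sum = (L.count t : R) := by
  induction L with
  | nil => simp
  | cons s L ih =>
    rw [List.map_cons, List.sum_cons, coeff_add, ih, prod_map_X_eq_monomial, coeff_monomial,
      List.count_cons, add_comm]
    simp only [EmbeddingLike.apply_eq_iff_eq, beq_iff_eq]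
    push_cast
    rfl

theorem sum_prod_map_X_mem_restrictDegree_one (L : List (Multiset σ)) (hL : ∀ s ∈ L, s.Nodup) :
    (L.map fun s => (s.map X).prod).sum ∈ restrictDegree σ R 1 := by
  refine list_sum_mem fun p hp => ?_
  obtain ⟨s, hs, rfl⟩ := List.mem_map.mp hp
  rw [prod_map_X_eq_monomial, mem_restrictDegree]
  intro m hm i
  rw [Finset.mem_singleton.mp (support_monomial_subset hm), Multiset.toFinsupp_apply]
  exact Multiset.nodup_iff_count_le_one.mp (hL s hs) i

end MvPolynomial

theorem dop_X_apply {n : ℕ} (i : Fin n) (f : MvPolynomial (Fin n) ℝ) :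
    dop n (X i) f = pderiv i f := by
  simp [dop]

theorem coeff_dop_prod_map_X {n : ℕ} (s : Multiset (Fin n)) {f : MvPolynomial (Fin n) ℝ}
    (hf : f ∈ restrictDegree (Fin n) ℝ 1) (m : Fin n →₀ ℕ) :
    coeff m (dop n (s.map X).prod f) = coeff (m + Multiset.toFinsupp s) f := by
  induction s using Multiset.induction_on generalizing f with
  | empty => simp
  | cons a s ih =>
    rw [Multiset.map_cons, Multiset.prod_cons, mul_comm, map_mul, Module.End.mul_apply,
      dop_X_apply, ih (pderiv_mem_restrictDegree hf a), coeff_pderiv_of_mem_restrictDegree_one hf,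
      ← Multiset.singleton_add, Multiset.toFinsupp_add, Multiset.toFinsupp_singleton, add_assoc,
      add_comm (Finsupp.single a 1)]

namespace Matrix

variable {m n o R : Type*} [CommRing R]

theorem charpoly_blockDiagonal [Fintype m] [DecidableEq m] [Fintype o] [DecidableEq o]
    (M : o → Matrix m m R) : (blockDiagonal M).charpoly = ∏ k, (M k).charpoly := by
  have : charmatrix (blockDiagonal M) = blockDiagonal fun k => charmatrix (M k) := by
    ext ⟨i, k⟩ ⟨j, l⟩
    simp only [charmatrix_apply, blockDiagonal_apply, diagonal_apply, Prod.mk.injEq]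
    split_ifs <;> simp_all
  rw [charpoly, this, det_blockDiagonal]
  rfl

theorem permMatrix_permCongr [DecidableEq m] [DecidableEq n] (e : m ≃ n) (τ : Equiv.Perm m) :
    (e.permCongr τ).permMatrix R = reindex e e (τ.permMatrix R) := by
  ext i j
  simp [PEquiv.toMatrix_apply, Equiv.permCongr_apply, Equiv.eq_symm_apply]

theorem permMatrix_prodCongr_refl [DecidableEq m] [DecidableEq o] (τ : Equiv.Perm m) :
    Equiv.Perm.permMatrix R (τ.prodCongr (Equiv.refl o)) =
      blockDiagonal fun _ => τ.permMatrix R := by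
  ext ⟨i, k⟩ ⟨j, l⟩
  by_cases hkl : k = l <;> simp [PEquiv.toMatrix_apply, blockDiagonal_apply, hkl]

theorem charpoly_permMatrix_swap :
    ((Equiv.swap (0 : Fin 2) 1).permMatrix R).charpoly =
      (Polynomial.X - Polynomial.C 1) * (Polynomial.X + Polynomial.C 1) := by
  rw [charpoly, det_fin_two]
  simp [PEquiv.toMatrix_apply]
  ring

theorem charpoly_permMatrix_permCongr_swap [Fintype n] [DecidableEq n] [Fintype o]
    [DecidableEq o] (e : Fin 2 × o ≃ n) :
    ((e.permCongr ((Equiv.swap 0 1).prodCongr (Equiv.refl o))).permMatrix R).charpoly =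
      (Polynomial.X - Polynomial.C 1) ^ Fintype.card o *
        (Polynomial.X + Polynomial.C 1) ^ Fintype.card o := by
  rw [permMatrix_permCongr, charpoly_reindex, permMatrix_prodCongr_refl, charpoly_blockDiagonal,
    Finset.prod_const, Finset.card_univ, charpoly_permMatrix_swap, mul_pow]

end Matrix

def lam2Vars : Fin 18 → Multiset (Fin 8) :=
  ![{0, 2}, {1, 3}, {0, 7}, {3, 4}, {1, 4}, {0, 5}, {2, 5}, {1, 6}, {3, 6}, {2, 7}, {5, 7},
    {4, 6}, {0, 1}, {0, 3}, {0, 4}, {1, 5}, {1, 2}, {2, 3}]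

theorem lam2_eq_prod_map_X (i : Fin 18) : lam2 i = ((lam2Vars i).map X).prod := by
  fin_cases i <;> simp [lam2, lam2Vars]

def cubeFaces : List (Multiset (Fin 8)) :=
  [{0, 1, 2, 3}, {1, 2, 5, 6}, {2, 3, 6, 7}, {0, 3, 4, 7}, {0, 1, 4, 5}, {4, 5, 6, 7}]

theorem Fhex_eq_sum_cubeFaces : Fhex = (cubeFaces.map fun s => (s.map X).prod).sum := by
  simp [Fhex, cubeFaces]
  ring

theorem Fhex_mem_restrictDegree_one : Fhex ∈ restrictDegree (Fin 8) ℝ 1 := by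
  rw [Fhex_eq_sum_cubeFaces]
  exact sum_prod_map_X_mem_restrictDegree_one _ (by decide)

theorem constantCoeff_dop_lam2_mul_lam2_Fhex (i j : Fin 18) :
    constantCoeff (dop 8 (lam2 i * lam2 j) Fhex) = cubeFaces.count (lam2Vars i + lam2Vars j) := by
  rw [lam2_eq_prod_map_X i, lam2_eq_prod_map_X j, ← Multiset.prod_add, ← Multiset.map_add,
    constantCoeff_eq, coeff_dop_prod_map_X _ Fhex_mem_restrictDegree_one, zero_add,
    Fhex_eq_sum_cubeFaces, coeff_toFinsupp_sum_prod_map_X]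

/-- `cubeBlocks (0, k)` and `cubeBlocks (1, k)` index the two monomials of `Λ₂` whose product is
the monomial of a face of the cube. -/
def cubeBlocks : Fin 2 × Fin 9 ≃ Fin 18 where
  toFun p := ![![0, 2, 4, 6, 8, 10, 12, 13, 14], ![1, 3, 5, 7, 9, 11, 17, 16, 15]] p.1 p.2
  invFun i := (![0, 1, 0, 1, 0, 1, 0, 1, 0, 1, 0, 1, 0, 0, 0, 1, 1, 1] i,
    ![0, 0, 1, 1, 2, 2, 3, 3, 4, 4, 5, 5, 6, 7, 8, 8, 7, 6] i)
  left_inv := by decide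
  right_inv := by decide

def cubeHessianPerm : Equiv.Perm (Fin 18) :=
  cubeBlocks.permCongr ((Equiv.swap 0 1).prodCongr (Equiv.refl _))

theorem count_cubeFaces_lam2Vars_add (i j : Fin 18) :
    cubeFaces.count (lam2Vars i + lam2Vars j) = if cubeHessianPerm i = j then 1 else 0 := by
  revert i j
  decide

theorem cubeHessian_eq_permMatrix :
    (Matrix.of fun i j : Fin 18 => constantCoeff (dop 8 (lam2 i * lam2 j) Fhex)) =
      cubeHessianPerm.permMatrix ℝ := by
  ext i j
  rw [Matrix.of_apply, constantCoeff_dop_lam2_mul_lam2_Fhex, count_cubeFaces_lam2Vars_add]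
  simp [PEquiv.toMatrix_apply]

/-- The second Hessian matrix of the facet polynomial of the cube with respect to the list
`Λ₂` of 18 degree-two monomials has eigenvalues `1` and `-1`, each with multiplicity `9`
(equivalently, its characteristic polynomial is `(x-1)⁹(x+1)⁹`); in particular its
determinant is nonzero. -/
theorem hexahedron_second_hessian_eigenvalues :
    (Matrix.of fun i j : Fin 18 =>
        constantCoeff (dop 8 (lam2 i * lam2 j) Fhex)).charpoly =
        (Polynomial.X - Polynomial.C 1) ^ 9 * (Polynomial.X + Polynomial.C 1) ^ 9 ∧
      (Matrix.of fun i j : Fin 18 =>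
        constantCoeff (dop 8 (lam2 i * lam2 j) Fhex)).det ≠ 0 := by
  rw [cubeHessian_eq_permMatrix, Matrix.det_permutation]
  exact ⟨Matrix.charpoly_permMatrix_permCongr_swap cubeBlocks, by simp⟩

end
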